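/- Let a ∈ ℂ with a ≠ 1, and define the Möbius maps φ_a(u) = (au + 1)/(u + 1) and J_a(u) = ((a+1)u − 2a)/(2u − (a+1)). Then: (i) J_a(1) = 1, J_a(a) = a, and J_a(J_a(u)) = u for every u where both evaluations are defined, so J_a is an involution fixing 1 and a; (ii) for every w ∈ ℂ with w ≠ 1 and w ≠ −1, J_a(φ_a(w)) = (aw − 1)/(w − 1); (iii) consequently, for all z, w ∈ ℂ with z ≠ −1, w ≠ 1 and w ≠ −1, the relation ((aw−1)/(w−1))² + ((aw−1)/(w−1))·((az+1)/(z+1)) + ((az+1)/(z+1))² = 3 holds if and only if Y² + Y·X + X² = 3, where Y = φ_a(z) and X = J_a(φ_a(w)). -/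

import Mathlib

noncomputable section

/-- The Möbius change of coordinates `φ_a(u) = (au + 1)/(u + 1)`. -/
def phiMap (a u : ℂ) : ℂ := (a * u + 1) / (u + 1)

/-- The Möbius involution `J_a(u) = ((a+1)u − 2a)/(2u − (a+1))` fixing `1` and `a`. -/
def Jmap (a u : ℂ) : ℂ := ((a + 1) * u - 2 * a) / (2 * u - (a + 1))

/-!
`φ_a` sends `0 ↦ 1` and `∞ ↦ a`, so it conjugates the involution `u ↦ -u`, which fixes `0` and
`∞`, to the Möbius involution fixing `1` and `a`, namely `J_a`: thus `J_a ∘ φ_a = φ_a ∘ (-·)`.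
Since `φ_a(-w) = (aw - 1)/(w - 1)`, the defining relation of `F_a` at `(z, w)` is the symmetric
relation `X² + XY + Y² = 3` of `Cov₀^Q` at `(φ_a z, J_a (φ_a w))`.
-/

theorem Jmap_one {a : ℂ} (ha : a ≠ 1) : Jmap a 1 = 1 := by
  rw [Jmap, show (a + 1) * 1 - 2 * a = 2 * 1 - (a + 1) by ring]
  exact div_self fun h => ha (by linear_combination -h)

theorem Jmap_self {a : ℂ} (ha : a ≠ 1) : Jmap a a = a := by
  rw [Jmap, div_eq_iff fun h => ha (by linear_combination h)]
  ring

theorem two_mul_Jmap_sub {a u : ℂ} (hu : 2 * u - (a + 1) ≠ 0) :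
    2 * Jmap a u - (a + 1) = (a - 1) ^ 2 / (2 * u - (a + 1)) := by
  rw [Jmap, eq_div_iff hu, sub_mul, mul_assoc, div_mul_cancel₀ _ hu]
  ring

theorem add_one_mul_Jmap_sub {a u : ℂ} (hu : 2 * u - (a + 1) ≠ 0) :
    (a + 1) * Jmap a u - 2 * a = (a - 1) ^ 2 * u / (2 * u - (a + 1)) := by
  rw [Jmap, eq_div_iff hu, sub_mul, mul_assoc, div_mul_cancel₀ _ hu]
  ring

theorem Jmap_Jmap {a u : ℂ} (hu : 2 * u - (a + 1) ≠ 0) (hJu : 2 * Jmap a u - (a + 1) ≠ 0) :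
    Jmap a (Jmap a u) = u := by
  have hsq : (a - 1) ^ 2 ≠ 0 := by
    rw [two_mul_Jmap_sub hu] at hJu; exact (div_ne_zero_iff.mp hJu).1
  rw [Jmap, add_one_mul_Jmap_sub hu, two_mul_Jmap_sub hu, div_div_div_cancel_right₀ hu,
    mul_div_cancel_left₀ u hsq]

theorem phiMap_neg (a w : ℂ) : phiMap a (-w) = (a * w - 1) / (w - 1) := by
  rw [phiMap, ← neg_div_neg_eq]
  ring_nf

theorem two_mul_phiMap_sub {a w : ℂ} (hw : w + 1 ≠ 0) :
    2 * phiMap a w - (a + 1) = (a - 1) * (w - 1) / (w + 1) := by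
  rw [phiMap, eq_div_iff hw, sub_mul, mul_assoc, div_mul_cancel₀ _ hw]
  ring

theorem Jmap_phiMap {a w : ℂ} (ha : a ≠ 1) (hw : w ≠ -1) :
    Jmap a (phiMap a w) = phiMap a (-w) := by
  have hw' : w + 1 ≠ 0 := fun h => hw (by linear_combination h)
  rcases eq_or_ne w 1 with rfl | hw1
  · -- at `w = 1` both sides are the junk value `x / 0 = 0`
    simp only [Jmap, two_mul_phiMap_sub hw', phiMap_neg]
    simp
  have hD : 2 * phiMap a w - (a + 1) ≠ 0 := by
    rw [two_mul_phiMap_sub hw']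
    exact div_ne_zero (mul_ne_zero (sub_ne_zero.mpr ha) (sub_ne_zero.mpr hw1)) hw'
  rw [Jmap, div_eq_iff hD, phiMap_neg, phiMap]
  field_simp
  ring

/-- The coordinate change `φ_a` conjugates the correspondence `F_a` to
`J_a ∘ Cov₀^Q` where `Q(u) = u³`:
(i) `J_a` is an involution fixing `1` and `a`;
(ii) `J_a(φ_a(w)) = (aw − 1)/(w − 1)` for `w ≠ ±1`;
(iii) the defining relation of `F_a` holds at `(z, w)` iff `Y² + YX + X² = 3`
for `Y = φ_a(z)` and `X = J_a(φ_a(w))`. -/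
theorem correspondence_change_of_coordinates (a : ℂ) (ha : a ≠ 1) :
    (Jmap a 1 = 1 ∧ Jmap a a = a ∧
      ∀ u : ℂ, 2 * u - (a + 1) ≠ 0 → 2 * Jmap a u - (a + 1) ≠ 0 →
        Jmap a (Jmap a u) = u) ∧
    (∀ w : ℂ, w ≠ 1 → w ≠ -1 → Jmap a (phiMap a w) = (a * w - 1) / (w - 1)) ∧
    (∀ z w : ℂ, z ≠ -1 → w ≠ 1 → w ≠ -1 →
      (((a * w - 1) / (w - 1)) ^ 2 +
          ((a * w - 1) / (w - 1)) * ((a * z + 1) / (z + 1)) +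
          ((a * z + 1) / (z + 1)) ^ 2 = 3 ↔
        (phiMap a z) ^ 2 + (phiMap a z) * (Jmap a (phiMap a w)) +
          (Jmap a (phiMap a w)) ^ 2 = 3)) := by
  have hJφ (w : ℂ) (hw : w ≠ -1) : Jmap a (phiMap a w) = (a * w - 1) / (w - 1) :=
    (Jmap_phiMap ha hw).trans (phiMap_neg a w)
  refine ⟨⟨Jmap_one ha, Jmap_self ha, fun u => Jmap_Jmap⟩, fun w _ => hJφ w, ?_⟩
  intro z w _ _ hw
  rw [hJφ w hw, phiMap]
  exact iff_of_eq (congrArg (· = (3 : ℂ)) (by ring))
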